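/- arXiv:1104.1981 — 7 statements merged into one kernel-verified Lean document; each statement's English description precedes it below -/
import Mathlib

section
/- For a constant a ≠ 0, the function U(t,x) = a − 4a / (4a² z² + 1), where z = x − 6a² t, is a solution of the mKdV equation U_t + 6U² U_x + U_{xxx} = 0. -/
/-!
The solution is a travelling wave `U t x = f (x - 6a²t)`, so the mKdV equation reduces to the
ODE `f''' + (6f² - 6a²) f' = 0` for the profile `f z = a - 4a / (4a²z² + 1)`. With
`p = 4a²z²` one has `f = a (p - 3) / (p + 1)`, hence `6f² - 6a² = 48a² (1 - p) / (p + 1)²`,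
and both terms of the ODE equal `± 1536 a⁵ z (p - 1) / (p + 1)⁴`.
-/

theorem deriv_travellingWave (f : ℝ → ℝ) (c t x : ℝ) :
    deriv (fun s => f (x - c * s)) t = -c * deriv f (x - c * t) := by
  rw [deriv_comp_mul_left c (fun y => f (x - y)), deriv_comp_const_sub, smul_eq_mul, mul_neg,
    neg_mul]

theorem mkdv_travellingWave (f : ℝ → ℝ) (c t x : ℝ) :
    deriv (fun s => f (x - c * s)) t + 6 * f (x - c * t) ^ 2 * deriv (fun y => f (y - c * t)) x
        + iteratedDeriv 3 (fun y => f (y - c * t)) x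
      = iteratedDeriv 3 f (x - c * t) + (6 * f (x - c * t) ^ 2 - c) * deriv f (x - c * t) := by
  rw [deriv_travellingWave, deriv_comp_sub_const, iteratedDeriv_comp_sub_const]
  ring

noncomputable def mkdvRationalProfile (a z : ℝ) : ℝ := a - 4 * a / (4 * a ^ 2 * z ^ 2 + 1)

namespace mkdvRationalProfile

variable (a z : ℝ)

theorem denom_ne_zero : 4 * a ^ 2 * z ^ 2 + 1 ≠ 0 := by positivity

theorem hasDerivAt_denom :
    HasDerivAt (fun z => 4 * a ^ 2 * z ^ 2 + 1) (8 * a ^ 2 * z) z := by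
  refine (((hasDerivAt_pow 2 z).const_mul (4 * a ^ 2)).add_const 1).congr_deriv ?_
  ring

theorem hasDerivAt :
    HasDerivAt (mkdvRationalProfile a) (32 * a ^ 3 * z / (4 * a ^ 2 * z ^ 2 + 1) ^ 2) z := by
  refine (((hasDerivAt_const z (4 * a)).fun_div (hasDerivAt_denom a z)
    (denom_ne_zero a z)).const_sub a).congr_deriv ?_
  ring

theorem hasDerivAt_deriv :
    HasDerivAt (deriv (mkdvRationalProfile a))
      (32 * a ^ 3 * (1 - 12 * a ^ 2 * z ^ 2) / (4 * a ^ 2 * z ^ 2 + 1) ^ 3) z := by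
  have hd : deriv (mkdvRationalProfile a) = fun z => 32 * a ^ 3 * z / (4 * a ^ 2 * z ^ 2 + 1) ^ 2 :=
    funext fun z => (hasDerivAt a z).deriv
  rw [hd]
  refine (((hasDerivAt_id' z).const_mul (32 * a ^ 3)).fun_div ((hasDerivAt_denom a z).fun_pow 2)
    (pow_ne_zero 2 (denom_ne_zero a z))).congr_deriv ?_
  field_simp [denom_ne_zero a z]
  ring

theorem iteratedDeriv_three :
    iteratedDeriv 3 (mkdvRationalProfile a) z
      = 1536 * a ^ 5 * z * (4 * a ^ 2 * z ^ 2 - 1) / (4 * a ^ 2 * z ^ 2 + 1) ^ 4 := by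
  have hd : deriv (deriv (mkdvRationalProfile a))
      = fun z => 32 * a ^ 3 * (1 - 12 * a ^ 2 * z ^ 2) / (4 * a ^ 2 * z ^ 2 + 1) ^ 3 :=
    funext fun z => (hasDerivAt_deriv a z).deriv
  rw [iteratedDeriv_succ, iteratedDeriv_succ, iteratedDeriv_one, hd]
  have hnum : HasDerivAt (fun z => 32 * a ^ 3 * (1 - 12 * a ^ 2 * z ^ 2))
      (-768 * a ^ 5 * z) z := by
    refine ((((hasDerivAt_pow 2 z).const_mul (12 * a ^ 2)).const_sub 1).const_mul
      (32 * a ^ 3)).congr_deriv ?_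
    ring
  refine (hnum.fun_div ((hasDerivAt_denom a z).fun_pow 3)
    (pow_ne_zero 3 (denom_ne_zero a z))).deriv.trans ?_
  field_simp [denom_ne_zero a z]
  ring

theorem ode :
    iteratedDeriv 3 (mkdvRationalProfile a) z
      + (6 * mkdvRationalProfile a z ^ 2 - 6 * a ^ 2) * deriv (mkdvRationalProfile a) z = 0 := by
  rw [iteratedDeriv_three, (hasDerivAt a z).deriv, mkdvRationalProfile]
  field_simp [denom_ne_zero a z]
  ring

end mkdvRationalProfile

theorem stmt_5_general (a : ℝ) (U : ℝ → ℝ → ℝ)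
    (hU : ∀ t x, U t x = a - 4 * a / (4 * a^2 * (x - 6 * a^2 * t)^2 + 1)) :
    ∀ t x, deriv (fun s => U s x) t + 6 * (U t x)^2 * deriv (U t) x
      + iteratedDeriv 3 (U t) x = 0 := by
  obtain rfl : U = fun t x => mkdvRationalProfile a (x - 6 * a ^ 2 * t) := by
    funext t x
    exact hU t x
  intro t x
  rw [mkdv_travellingWave]
  exact mkdvRationalProfile.ode a _

/-- Rational solution of the mKdV equation `U_t + 6U²U_x + U_{xxx} = 0`. -/
theorem stmt_5 (a : ℝ) (ha : a ≠ 0) (U : ℝ → ℝ → ℝ)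
    (hU : ∀ t x, U t x = a - 4 * a / (4 * a^2 * (x - 6 * a^2 * t)^2 + 1)) :
    ∀ t x, deriv (fun s => U s x) t + 6 * (U t x)^2 * deriv (U t) x
      + iteratedDeriv 3 (U t) x = 0 :=
  stmt_5_general a U hU
end

section
/- Let h : ℝ → ℝ be smooth with antiderivative H, and let U solve U_T + 6U² U_x + U_{xxx} = 0. Then u(t,x) := √6 · e^{−H(t)} · U(∫₀ᵗ e^{−2H(s)} ds, x) solves u_t + u² u_x + e^{−2H(t)} u_{xxx} + h(t) u = 0. -/
private lemma itd_const_mul (c : ℝ) (f : ℝ → ℝ) (n : ℕ) :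
    iteratedDeriv n (fun y => c * f y) = fun y => c * iteratedDeriv n f y := by
  induction n with
  | zero => simp
  | succ n ih =>
      rw [iteratedDeriv_succ, ih, iteratedDeriv_succ]
      funext x
      exact deriv_const_mul_field c

/-- Transfer of solutions from the canonical mKdV equation to
`u_t + u²u_x + e^{−2H(t)} u_{xxx} + h(t) u = 0`. -/
theorem stmt_7 (h H : ℝ → ℝ) (U : ℝ → ℝ → ℝ)
    (hh : ContDiff ℝ (⊤ : ℕ∞) h)
    (hH : ∀ t, HasDerivAt H (h t) t)
    (hUsmooth : ContDiff ℝ (⊤ : ℕ∞) (fun p : ℝ × ℝ => U p.1 p.2))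
    (hUsol : ∀ T x, deriv (fun S => U S x) T + 6 * (U T x)^2 * deriv (U T) x
      + iteratedDeriv 3 (U T) x = 0)
    (u : ℝ → ℝ → ℝ)
    (hu : ∀ t x, u t x = Real.sqrt 6 * Real.exp (-H t)
      * U (∫ s in (0:ℝ)..t, Real.exp (-2 * H s)) x) :
    ∀ t x, deriv (fun s => u s x) t + (u t x)^2 * deriv (u t) x
      + Real.exp (-2 * H t) * iteratedDeriv 3 (u t) x + h t * u t x = 0 := by
  intro t x
  set G : ℝ → ℝ := (fun t => ∫ s in (0:ℝ)..t, Real.exp (-2 * H s)) with hGdef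
  have hHc : Continuous H := by
    have : Differentiable ℝ H := fun t => (hH t).differentiableAt
    exact this.continuous
  have hInt : Continuous (fun s => Real.exp (-2 * H s)) := by continuity
  have hG : HasDerivAt G (Real.exp (-2 * H t)) t := by
    exact intervalIntegral.integral_hasDerivAt_right
      (hInt.intervalIntegrable 0 t) (hInt.stronglyMeasurableAtFilter _ _)
      hInt.continuousAt
  -- smoothness in each variable
  have hU1 : ∀ y, ContDiff ℝ (⊤ : ℕ∞) (fun S => U S y) := fun y =>
    hUsmooth.comp (contDiff_id.prodMk contDiff_const)
  have hU2 : ∀ T, ContDiff ℝ (⊤ : ℕ∞) (U T) := fun T =>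
    hUsmooth.comp (contDiff_const.prodMk contDiff_id)
  -- time derivative
  have hcomp : HasDerivAt (fun s => U (G s) x)
      (deriv (fun S => U S x) (G t) * Real.exp (-2 * H t)) t :=
    (((hU1 x).differentiable (by simp) (G t)).hasDerivAt).comp t hG
  have hexp : HasDerivAt (fun s => Real.exp (-H s))
      (Real.exp (-H t) * (-h t)) t := (hH t).neg.exp
  have hprod : HasDerivAt (fun s => Real.exp (-H s) * U (G s) x)
      (Real.exp (-H t) * (-h t) * U (G t) x
        + Real.exp (-H t) * (deriv (fun S => U S x) (G t) * Real.exp (-2 * H t))) t :=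
    hexp.mul hcomp
  have hut : deriv (fun s => u s x) t
      = Real.sqrt 6 * (Real.exp (-H t) * (-h t) * U (G t) x
        + Real.exp (-H t) * (deriv (fun S => U S x) (G t) * Real.exp (-2 * H t))) := by
    have : (fun s => u s x) = fun s => Real.sqrt 6 * (Real.exp (-H s) * U (G s) x) := by
      funext s; rw [hu s x]; ring
    rw [this]
    exact (hprod.const_mul (Real.sqrt 6)).deriv
  -- spatial facts
  have hufun : u t = fun y => Real.sqrt 6 * Real.exp (-H t) * U (G t) y := by
    funext y; exact hu t y
  have hux : deriv (u t) x = Real.sqrt 6 * Real.exp (-H t) * deriv (U (G t)) x := by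
    rw [hufun]
    exact deriv_const_mul_field _
  have huxxx : iteratedDeriv 3 (u t) x
      = Real.sqrt 6 * Real.exp (-H t) * iteratedDeriv 3 (U (G t)) x := by
    rw [hufun, itd_const_mul]
  have hsol := hUsol (G t) x
  have h6 : Real.sqrt 6 ^ 2 = 6 := Real.sq_sqrt (by norm_num)
  have hE : Real.exp (-2 * H t) = Real.exp (-H t) ^ 2 := by
    rw [sq, ← Real.exp_add]; ring_nf
  rw [hut, hux, huxxx, hu t x, hE] at *
  set S := Real.sqrt 6
  set E := Real.exp (-H t)
  set A := U (G t) x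
  set B := deriv (U (G t)) x
  set C := iteratedDeriv 3 (U (G t)) x
  set D := deriv (fun S => U S x) (G t)
  linear_combination (S * E ^ 3) * hsol + (A ^ 2 * B * E ^ 3 * S) * h6
end

section
/- For constants k₀ ≠ 0, a, b and smooth h : ℝ → ℝ with antiderivative H, the function u(t,x) = √6 e^{−H(t)} ( a + k₀² / (√(4a²+k₀²) cosh(z) + 2a) ), with z = k₀ x − k₀(6a² + k₀²) ∫₀ᵗ e^{−2H(s)} ds + b, solves u_t + u² u_x + e^{−2H(t)} u_{xxx} + h(t) u = 0 (where the denominator is nonzero). -/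
private lemma mkdv_L1 {A a k : ℝ} {φ : ℝ → ℝ} {φ' x : ℝ} (hφ : HasDerivAt φ φ' x)
    (hD : A * Real.cosh (φ x) + 2 * a ≠ 0) :
    HasDerivAt (fun y => a + k ^ 2 / (A * Real.cosh (φ y) + 2 * a))
      (-(k ^ 2 * A * Real.sinh (φ x)) * φ' / (A * Real.cosh (φ x) + 2 * a) ^ 2) x := by
  have hDD : HasDerivAt (fun y => A * Real.cosh (φ y) + 2 * a)
      (A * Real.sinh (φ x) * φ') x := by
    have := ((Real.hasDerivAt_cosh (φ x)).comp x hφ).const_mul A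
    simpa [mul_assoc] using this.add_const (2 * a)
  have := ((hasDerivAt_const x (k ^ 2)).div hDD hD).const_add a
  refine this.congr_deriv ?_
  field_simp
  ring

private lemma mkdv_L2 (A a k m c : ℝ) (hD : ∀ y : ℝ, A * Real.cosh y + 2 * a ≠ 0) (x : ℝ) :
    HasDerivAt (fun y => -(k ^ 2 * A * Real.sinh (m * y + c)) * m
        / (A * Real.cosh (m * y + c) + 2 * a) ^ 2)
      (k ^ 2 * (-(A * Real.cosh (m * x + c)) * (A * Real.cosh (m * x + c) + 2 * a)
          + 2 * A ^ 2 * Real.sinh (m * x + c) ^ 2) * m ^ 2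
        / (A * Real.cosh (m * x + c) + 2 * a) ^ 3) x := by
  have haff : HasDerivAt (fun y : ℝ => m * y + c) m x := by
    simpa using ((hasDerivAt_id x).const_mul m).add_const c
  have hch : HasDerivAt (fun y => Real.cosh (m * y + c)) (Real.sinh (m * x + c) * m) x :=
    (Real.hasDerivAt_cosh _).comp x haff
  have hsh : HasDerivAt (fun y => Real.sinh (m * y + c)) (Real.cosh (m * x + c) * m) x :=
    (Real.hasDerivAt_sinh _).comp x haff
  have hDD : HasDerivAt (fun y => A * Real.cosh (m * y + c) + 2 * a)
      (A * (Real.sinh (m * x + c) * m)) x := (hch.const_mul A).add_const (2 * a)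
  have hnum : HasDerivAt (fun y => -(k ^ 2 * A * Real.sinh (m * y + c)) * m)
      (-(k ^ 2 * A * (Real.cosh (m * x + c) * m)) * m) x := by
    have := (hsh.const_mul (k ^ 2 * A)).neg.mul_const m
    simpa [mul_assoc] using this
  have hden := hDD.pow 2
  have := hnum.div hden (pow_ne_zero 2 (hD _))
  refine this.congr_deriv ?_
  symm
  simp only [Pi.pow_apply]
  rw [div_eq_div_iff (pow_ne_zero _ (hD _)) (pow_ne_zero _ (pow_ne_zero _ (hD _)))]
  push_cast
  ring

private lemma mkdv_L3 (A a k m c : ℝ) (hD : ∀ y : ℝ, A * Real.cosh y + 2 * a ≠ 0) (x : ℝ) :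
    HasDerivAt (fun y => k ^ 2 * (-(A * Real.cosh (m * y + c)) * (A * Real.cosh (m * y + c) + 2 * a)
          + 2 * A ^ 2 * Real.sinh (m * y + c) ^ 2) * m ^ 2
        / (A * Real.cosh (m * y + c) + 2 * a) ^ 3)
      (k ^ 2 * (-(A * Real.sinh (m * x + c)) * (A * Real.cosh (m * x + c) + 2 * a) ^ 2
          + 6 * A ^ 2 * Real.sinh (m * x + c) * Real.cosh (m * x + c)
              * (A * Real.cosh (m * x + c) + 2 * a)
          - 6 * A ^ 3 * Real.sinh (m * x + c) ^ 3) * m ^ 3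
        / (A * Real.cosh (m * x + c) + 2 * a) ^ 4) x := by
  have haff : HasDerivAt (fun y : ℝ => m * y + c) m x := by
    simpa using ((hasDerivAt_id x).const_mul m).add_const c
  have hch : HasDerivAt (fun y => Real.cosh (m * y + c)) (Real.sinh (m * x + c) * m) x :=
    (Real.hasDerivAt_cosh _).comp x haff
  have hsh : HasDerivAt (fun y => Real.sinh (m * y + c)) (Real.cosh (m * x + c) * m) x :=
    (Real.hasDerivAt_sinh _).comp x haff
  have hDD : HasDerivAt (fun y => A * Real.cosh (m * y + c) + 2 * a)
      (A * (Real.sinh (m * x + c) * m)) x := (hch.const_mul A).add_const (2 * a)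
  have t1 := ((hch.const_mul A).neg.mul hDD)
  have t2 := (hsh.pow 2).const_mul (2 * A ^ 2)
  have hnum := ((t1.add t2).const_mul (k ^ 2)).mul_const (m ^ 2)
  have hden := hDD.pow 3
  have := hnum.div hden (pow_ne_zero 3 (hD _))
  refine this.congr_deriv ?_
  symm
  simp only [Pi.pow_apply, Pi.neg_apply, Pi.mul_apply, Pi.add_apply]
  rw [div_eq_div_iff (pow_ne_zero _ (hD _)) (pow_ne_zero _ (pow_ne_zero _ (hD _)))]
  push_cast
  ring

private lemma mkdv_key (a k h S E A sh ch : ℝ)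
    (hS : S ^ 2 = 6) (hA : A ^ 2 = 4 * a ^ 2 + k ^ 2) (hch : ch ^ 2 = 1 + sh ^ 2)
    (hD : A * ch + 2 * a ≠ 0) :
    (S * (E * -h) * (a + k ^ 2 / (A * ch + 2 * a))
      + S * E * (-(k ^ 2 * A * sh) * -(k * (6 * a ^ 2 + k ^ 2) * E ^ 2) / (A * ch + 2 * a) ^ 2))
      + (S * E * (a + k ^ 2 / (A * ch + 2 * a))) ^ 2
          * (S * E * (-(k ^ 2 * A * sh) * k / (A * ch + 2 * a) ^ 2))
      + E ^ 2 * (S * E * (k ^ 2 * (-(A * sh) * (A * ch + 2 * a) ^ 2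
            + 6 * A ^ 2 * sh * ch * (A * ch + 2 * a) - 6 * A ^ 3 * sh ^ 3) * k ^ 3
          / (A * ch + 2 * a) ^ 4))
      + h * (S * E * (a + k ^ 2 / (A * ch + 2 * a))) = 0 := by
  have main : (S * (E * -h) * (a + k ^ 2 / (A * ch + 2 * a))
      + S * E * (-(k ^ 2 * A * sh) * -(k * (6 * a ^ 2 + k ^ 2) * E ^ 2) / (A * ch + 2 * a) ^ 2))
      + (S * E * (a + k ^ 2 / (A * ch + 2 * a))) ^ 2
          * (S * E * (-(k ^ 2 * A * sh) * k / (A * ch + 2 * a) ^ 2))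
      + E ^ 2 * (S * E * (k ^ 2 * (-(A * sh) * (A * ch + 2 * a) ^ 2
            + 6 * A ^ 2 * sh * ch * (A * ch + 2 * a) - 6 * A ^ 3 * sh ^ 3) * k ^ 3
          / (A * ch + 2 * a) ^ 4))
      + h * (S * E * (a + k ^ 2 / (A * ch + 2 * a)))
      = (S * E ^ 3 * k ^ 3 * A * sh * ((6 * a ^ 2 + k ^ 2) * (A * ch + 2 * a) ^ 2
          - S ^ 2 * (a * (A * ch + 2 * a) + k ^ 2) ^ 2)
        + S * E ^ 3 * k ^ 5 * (-(A * sh) * (A * ch + 2 * a) ^ 2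
            + 6 * A ^ 2 * sh * ch * (A * ch + 2 * a) - 6 * A ^ 3 * sh ^ 3))
        / (A * ch + 2 * a) ^ 4 := by
    generalize hDD : A * ch + 2 * a = D at hD ⊢
    field_simp
    subst hDD
    ring
  rw [main, div_eq_zero_iff]
  left
  linear_combination (-(S * E ^ 3 * k ^ 3 * A * sh * (a * (A * ch + 2 * a) + k ^ 2) ^ 2)) * hS
    + (6 * S * E ^ 3 * k ^ 5 * A * sh * A ^ 2) * hch
    + (6 * S * E ^ 3 * k ^ 5 * A * sh) * hA

/-- One-soliton solution of the variable coefficient mKdV equation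
`u_t + u²u_x + e^{−2H(t)} u_{xxx} + h(t) u = 0`. -/
theorem stmt_8 (k₀ a b : ℝ) (hk₀ : k₀ ≠ 0) (h H : ℝ → ℝ)
    (hh : ContDiff ℝ (⊤ : ℕ∞) h)
    (hH : ∀ t, HasDerivAt H (h t) t)
    (u : ℝ → ℝ → ℝ) (z : ℝ → ℝ → ℝ)
    (hz : ∀ t x, z t x = k₀ * x
      - k₀ * (6 * a^2 + k₀^2) * (∫ s in (0:ℝ)..t, Real.exp (-2 * H s)) + b)
    (hu : ∀ t x, u t x = Real.sqrt 6 * Real.exp (-H t)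
      * (a + k₀^2 / (Real.sqrt (4 * a^2 + k₀^2) * Real.cosh (z t x) + 2 * a))) :
    ∀ t x, Real.sqrt (4 * a^2 + k₀^2) * Real.cosh (z t x) + 2 * a ≠ 0 →
      deriv (fun s => u s x) t + (u t x)^2 * deriv (u t) x
        + Real.exp (-2 * H t) * iteratedDeriv 3 (u t) x + h t * u t x = 0 := by
  intro t x _
  set A := Real.sqrt (4 * a ^ 2 + k₀ ^ 2) with hAdef
  have hk2 : (0:ℝ) < k₀ ^ 2 := by positivity
  have hA2 : A ^ 2 = 4 * a ^ 2 + k₀ ^ 2 := Real.sq_sqrt (by positivity)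
  have hApos : 0 < A := Real.sqrt_pos.mpr (by positivity)
  have hA2a : 0 < A + 2 * a := by nlinarith [sq_nonneg (A + 2 * a)]
  have hDpos : ∀ y : ℝ, 0 < A * Real.cosh y + 2 * a := by
    intro y
    nlinarith [Real.one_le_cosh y, mul_le_mul_of_nonneg_left (Real.one_le_cosh y) hApos.le]
  have hDne : ∀ y : ℝ, A * Real.cosh y + 2 * a ≠ 0 := fun y => (hDpos y).ne'
  -- fundamental theorem of calculus
  have hIc : Continuous fun s => Real.exp (-2 * H s) := by
    have : Continuous H := Differentiable.continuous fun t => (hH t).differentiableAt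
    fun_prop
  have hI : HasDerivAt (fun r => ∫ s in (0:ℝ)..r, Real.exp (-2 * H s))
      (Real.exp (-2 * H t)) t :=
    intervalIntegral.integral_hasDerivAt_right (hIc.intervalIntegrable _ _)
      (hIc.stronglyMeasurableAtFilter _ _) hIc.continuousAt
  -- time derivative
  have hzt : HasDerivAt (fun s => z s x)
      (-(k₀ * (6 * a ^ 2 + k₀ ^ 2) * Real.exp (-2 * H t))) t := by
    have h1 := ((hI.const_mul (k₀ * (6 * a ^ 2 + k₀ ^ 2))).const_sub (k₀ * x)).add_const b
    have hfun : (fun s => z s x) = fun s => k₀ * x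
        - k₀ * (6 * a ^ 2 + k₀ ^ 2) * (∫ r in (0:ℝ)..s, Real.exp (-2 * H r)) + b :=
      funext fun s => hz s x
    rw [hfun]
    exact h1
  have hexp : HasDerivAt (fun s => Real.exp (-H s)) (Real.exp (-H t) * -h t) t :=
    ((hH t).neg).exp
  have hinner_t := mkdv_L1 (A := A) (a := a) (k := k₀) hzt (hDne (z t x))
  have hprod := (hexp.const_mul (Real.sqrt 6)).mul hinner_t
  have hut_deriv : deriv (fun s => u s x) t
      = Real.sqrt 6 * (Real.exp (-H t) * -h t)
          * (a + k₀ ^ 2 / (A * Real.cosh (z t x) + 2 * a))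
        + Real.sqrt 6 * Real.exp (-H t)
          * (-(k₀ ^ 2 * A * Real.sinh (z t x))
              * -(k₀ * (6 * a ^ 2 + k₀ ^ 2) * Real.exp (-2 * H t))
            / (A * Real.cosh (z t x) + 2 * a) ^ 2) := by
    have hus : (fun s => u s x) = fun s => Real.sqrt 6 * Real.exp (-H s)
        * (a + k₀ ^ 2 / (A * Real.cosh (z s x) + 2 * a)) := funext fun s => hu s x
    rw [hus]
    exact hprod.deriv
  -- space derivatives
  set cc := b - k₀ * (6 * a ^ 2 + k₀ ^ 2) * (∫ s in (0:ℝ)..t, Real.exp (-2 * H s)) with hccdef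
  have hzx : ∀ y, z t y = k₀ * y + cc := by
    intro y
    rw [hz, hccdef]
    ring
  have hut : u t = fun y => Real.sqrt 6 * Real.exp (-H t)
      * (a + k₀ ^ 2 / (A * Real.cosh (k₀ * y + cc) + 2 * a)) :=
    funext fun y => by rw [hu, hzx]
  have haffd : ∀ y : ℝ, HasDerivAt (fun w => k₀ * w + cc) k₀ y := by
    intro y
    simpa using ((hasDerivAt_id y).const_mul k₀).add_const cc
  have h1 : ∀ y, HasDerivAt (u t)
      (Real.sqrt 6 * Real.exp (-H t) * (-(k₀ ^ 2 * A * Real.sinh (k₀ * y + cc)) * k₀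
        / (A * Real.cosh (k₀ * y + cc) + 2 * a) ^ 2)) y := by
    intro y
    rw [hut]
    exact (mkdv_L1 (haffd y) (hDne _)).const_mul (Real.sqrt 6 * Real.exp (-H t))
  have e1 : deriv (u t) = fun y => Real.sqrt 6 * Real.exp (-H t)
      * (-(k₀ ^ 2 * A * Real.sinh (k₀ * y + cc)) * k₀
        / (A * Real.cosh (k₀ * y + cc) + 2 * a) ^ 2) := funext fun y => (h1 y).deriv
  have h2 : ∀ y, HasDerivAt (fun y => Real.sqrt 6 * Real.exp (-H t)
      * (-(k₀ ^ 2 * A * Real.sinh (k₀ * y + cc)) * k₀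
        / (A * Real.cosh (k₀ * y + cc) + 2 * a) ^ 2))
      (Real.sqrt 6 * Real.exp (-H t)
        * (k₀ ^ 2 * (-(A * Real.cosh (k₀ * y + cc)) * (A * Real.cosh (k₀ * y + cc) + 2 * a)
            + 2 * A ^ 2 * Real.sinh (k₀ * y + cc) ^ 2) * k₀ ^ 2
          / (A * Real.cosh (k₀ * y + cc) + 2 * a) ^ 3)) y := fun y =>
    (mkdv_L2 A a k₀ k₀ cc hDne y).const_mul (Real.sqrt 6 * Real.exp (-H t))
  have e2 : deriv (deriv (u t)) = fun y => Real.sqrt 6 * Real.exp (-H t)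
      * (k₀ ^ 2 * (-(A * Real.cosh (k₀ * y + cc)) * (A * Real.cosh (k₀ * y + cc) + 2 * a)
          + 2 * A ^ 2 * Real.sinh (k₀ * y + cc) ^ 2) * k₀ ^ 2
        / (A * Real.cosh (k₀ * y + cc) + 2 * a) ^ 3) := by
    rw [e1]
    exact funext fun y => (h2 y).deriv
  have h3 := fun y => (mkdv_L3 A a k₀ k₀ cc hDne y).const_mul (Real.sqrt 6 * Real.exp (-H t))
  have hiter : iteratedDeriv 3 (u t) x = Real.sqrt 6 * Real.exp (-H t)
      * (k₀ ^ 2 * (-(A * Real.sinh (k₀ * x + cc)) * (A * Real.cosh (k₀ * x + cc) + 2 * a) ^ 2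
          + 6 * A ^ 2 * Real.sinh (k₀ * x + cc) * Real.cosh (k₀ * x + cc)
              * (A * Real.cosh (k₀ * x + cc) + 2 * a)
          - 6 * A ^ 3 * Real.sinh (k₀ * x + cc) ^ 3) * k₀ ^ 3
        / (A * Real.cosh (k₀ * x + cc) + 2 * a) ^ 4) := by
    have h30 : iteratedDeriv 3 (u t) = deriv (deriv (deriv (u t))) := by
      simp [iteratedDeriv_succ, iteratedDeriv_zero]
    rw [h30, e2]
    exact (h3 x).deriv
  -- assemble
  have hE2 : Real.exp (-2 * H t) = Real.exp (-H t) ^ 2 := by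
    rw [sq, ← Real.exp_add]
    congr 1
    ring
  have h6 : Real.sqrt 6 ^ 2 = 6 := Real.sq_sqrt (by norm_num)
  have hcs : Real.cosh (k₀ * x + cc) ^ 2 = 1 + Real.sinh (k₀ * x + cc) ^ 2 :=
    by rw [Real.cosh_sq]; ring
  rw [hut_deriv, hiter, (h1 x).deriv, hu t x, hzx x, hE2]
  exact mkdv_key a k₀ (h t) (Real.sqrt 6) (Real.exp (-H t)) A
    (Real.sinh (k₀ * x + cc)) (Real.cosh (k₀ * x + cc)) h6 hA2 hcs (hDne _)
end

section
/- Let u(t,x) be a smooth solution of u_t + u² u_x + δ e^t u_{xxx} = 0 with δ ≠ 0. Then for each ε ∈ ℝ, the function u_ε(t,x) := e^{ε/6} u(t − ε, e^{−ε/3} x) is also a solution of the same equation. -/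
lemma iterDeriv_const_mul' {n : ℕ} (c : ℝ) (f : ℝ → ℝ) (hf : ContDiff ℝ (⊤ : ℕ∞) f) (x : ℝ) :
    iteratedDeriv n (fun z => c * f z) x = c * iteratedDeriv n f x := by
  rw [← iteratedDerivWithin_univ, ← iteratedDerivWithin_univ]
  exact iteratedDerivWithin_const_mul (Set.mem_univ x) uniqueDiffOn_univ c
    ((hf.of_le (by exact_mod_cast le_top)).contDiffWithinAt)

/-- The symmetry group generated by `6∂_t + 2x∂_x + u∂_u` of
`u_t + u²u_x + δeᵗu_{xxx} = 0` maps solutions to solutions. -/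
theorem stmt_13 (δ : ℝ) (hδ : δ ≠ 0) (u : ℝ → ℝ → ℝ)
    (hu : ContDiff ℝ (⊤ : ℕ∞) (fun p : ℝ × ℝ => u p.1 p.2))
    (hsol : ∀ t x : ℝ,
      deriv (fun s => u s x) t + (u t x)^2 * deriv (u t) x
        + δ * Real.exp t * iteratedDeriv 3 (u t) x = 0) :
    ∀ ε t x : ℝ,
      (deriv (fun s => Real.exp (ε / 6) * u (s - ε) (Real.exp (-ε / 3) * x)) t)
      + (Real.exp (ε / 6) * u (t - ε) (Real.exp (-ε / 3) * x))^2
        * (deriv (fun y => Real.exp (ε / 6) * u (t - ε) (Real.exp (-ε / 3) * y)) x)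
      + δ * Real.exp t
        * iteratedDeriv 3 (fun y => Real.exp (ε / 6) * u (t - ε) (Real.exp (-ε / 3) * y)) x
      = 0 := by
  intro ε t x
  set a := Real.exp (ε / 6) with ha
  set c := Real.exp (-ε / 3) with hc
  have hux : ∀ s : ℝ, ContDiff ℝ (⊤ : ℕ∞) (u s) := fun s =>
    hu.comp (contDiff_const.prodMk contDiff_id)
  have hut : ∀ y : ℝ, ContDiff ℝ (⊤ : ℕ∞) (fun s => u s y) := fun y =>
    hu.comp (contDiff_id.prodMk contDiff_const)
  -- time derivative
  have ht : deriv (fun s => a * u (s - ε) (c * x)) t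
      = a * deriv (fun s => u s (c * x)) (t - ε) := by
    rw [deriv_comp_sub_const (f := fun s => a * u s (c * x))]
    rw [deriv_const_mul _ (((hut (c * x)).differentiable (by simp)).differentiableAt)]
  -- x derivative
  have hx : deriv (fun y => a * u (t - ε) (c * y)) x
      = a * c * deriv (u (t - ε)) (c * x) := by
    have h1 : deriv (fun y => a * u (t - ε) (c * y)) x
        = a * deriv (fun y => u (t - ε) (c * y)) x := by
      refine deriv_const_mul _ ?_
      exact (((hux (t - ε)).comp (contDiff_const.mul contDiff_id)).differentiable
        (by simp)).differentiableAt
    have h2 : deriv (fun y => u (t - ε) (c * y)) x = c * deriv (u (t - ε)) (c * x) := by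
      have := iteratedDeriv_comp_const_mul (n := 1) ((hux (t - ε)).of_le (by simp)) c
      have := congrFun this x
      simpa [iteratedDeriv_one] using this
    rw [h1, h2]; ring
  -- third derivative
  have h3 : iteratedDeriv 3 (fun y => a * u (t - ε) (c * y)) x
      = a * c ^ 3 * iteratedDeriv 3 (u (t - ε)) (c * x) := by
    have h1 : iteratedDeriv 3 (fun y => a * u (t - ε) (c * y)) x
        = a * iteratedDeriv 3 (fun y => u (t - ε) (c * y)) x :=
      iterDeriv_const_mul' a _ ((hux (t - ε)).comp (contDiff_const.mul contDiff_id)) x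
    have h2 : iteratedDeriv 3 (fun y => u (t - ε) (c * y)) x
        = c ^ 3 * iteratedDeriv 3 (u (t - ε)) (c * x) := by
      have := congrFun (iteratedDeriv_comp_const_mul (n := 3) ((hux (t - ε)).of_le (WithTop.coe_le_coe.mpr le_top)) c) x
      simpa using this
    rw [h1, h2]; ring
  rw [ht, hx, h3]
  have key := hsol (t - ε) (c * x)
  have hac : a ^ 3 * c = a := by
    rw [ha, hc, ← Real.exp_nat_mul, ← Real.exp_add]
    congr 1; push_cast; ring
  have hec : Real.exp (t - ε) = Real.exp t * c ^ 3 := by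
    rw [hc, ← Real.exp_nat_mul, ← Real.exp_add]
    congr 1; push_cast; ring
  rw [hec] at key
  linear_combination a * key
    + (u (t - ε) (c * x)) ^ 2 * deriv (u (t - ε)) (c * x) * hac
end

section
/- For a constant a ≠ 0, the function U(t,x) = a − 12a(z⁴ + (3/(2a²))z² − 3/(16a⁴) − 24tz) / (4a²(z³ + 12t − (3/(4a²))z)² + 9(z² + 1/(4a²))²), where z = x − 6a²t, is a solution of U_t + 6U² U_x + U_{xxx} = 0 on the set where the denominator is nonzero. -/
/-!
In the frame `z = x - 6a²t` the candidate is `U = a - 12a·P/Q` with `P, Q` polynomials in `z`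
whose coefficients are polynomial in `t` and `a⁻¹`. The `x`-derivatives of `U` are those of a
quotient of polynomials in `z`, and `∂ₜ U = -6a² ∂_z U + (∂ₜ at fixed z) U`. Clearing the
denominator `Q⁴`, the mKdV residual becomes a polynomial identity in `z`, `t`, `a`, `a⁻¹`.
-/

open Filter Polynomial

section QuotientRule

variable {𝕜 : Type*} [NontriviallyNormedField 𝕜]

theorem hasDerivAt_deriv_of_isOpen {f g : 𝕜 → 𝕜} {S : Set 𝕜} (hS : IsOpen S)
    (hf : ∀ y ∈ S, HasDerivAt f (g y) y) {x g' : 𝕜} (hx : x ∈ S) (hg : HasDerivAt g g' x) :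
    HasDerivAt (deriv f) g' x :=
  hg.congr_of_eventuallyEq (eventually_of_mem (hS.mem_nhds hx) fun y hy => (hf y hy).deriv)

variable {p q p₁ p₂ p₃ q₁ q₂ q₃ : 𝕜 → 𝕜}

theorem iteratedDeriv_three_div
    (hp : ∀ y, HasDerivAt p (p₁ y) y) (hp₁ : ∀ y, HasDerivAt p₁ (p₂ y) y)
    (hp₂ : ∀ y, HasDerivAt p₂ (p₃ y) y) (hq : ∀ y, HasDerivAt q (q₁ y) y)
    (hq₁ : ∀ y, HasDerivAt q₁ (q₂ y) y) (hq₂ : ∀ y, HasDerivAt q₂ (q₃ y) y)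
    {x : 𝕜} (hx : q x ≠ 0) :
    iteratedDeriv 3 (fun y => p y / q y) x =
      (p₃ x * q x ^ 3 - (3 * p₂ x * q₁ x + 3 * p₁ x * q₂ x + p x * q₃ x) * q x ^ 2
        + 6 * (p₁ x * q₁ x + p x * q₂ x) * q₁ x * q x - 6 * p x * q₁ x ^ 3) / q x ^ 4 := by
  have hS : IsOpen {y | q y ≠ 0} :=
    isOpen_ne_fun (continuous_iff_continuousAt.2 fun y => (hq y).continuousAt) continuous_const
  have h₁ (y : 𝕜) (hy : q y ≠ 0) : HasDerivAt (fun y => p y / q y)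
      ((p₁ y * q y - p y * q₁ y) / q y ^ 2) y := (hp y).div (hq y) hy
  have h₂ (y : 𝕜) (hy : q y ≠ 0) : HasDerivAt (deriv fun y => p y / q y)
      ((p₂ y * q y ^ 2 - 2 * (p₁ y * q₁ y * q y) + 2 * (p y * q₁ y ^ 2) - p y * q y * q₂ y)
        / q y ^ 3) y := by
    refine hasDerivAt_deriv_of_isOpen hS h₁ hy ?_
    refine ((((hp₁ y).mul (hq y)).sub ((hp y).mul (hq₁ y))).div ((hq y).pow 2)
      (pow_ne_zero 2 hy)).congr_deriv ?_
    simp only [Pi.pow_apply, Pi.mul_apply, Pi.sub_apply]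
    field_simp
    ring
  rw [iteratedDeriv_succ, iteratedDeriv_succ, iteratedDeriv_one]
  refine (hasDerivAt_deriv_of_isOpen hS h₂ hx ?_).deriv
  refine ((((((hp₂ x).mul ((hq x).pow 2)).sub
    ((((hp₁ x).mul (hq₁ x)).mul (hq x)).const_mul 2)).add
      (((hp x).mul ((hq₁ x).pow 2)).const_mul 2)).sub (((hp x).mul (hq x)).mul (hq₂ x))).div
        ((hq x).pow 3) (pow_ne_zero 3 hx)).congr_deriv ?_
  simp only [Pi.pow_apply, Pi.mul_apply, Pi.sub_apply, Pi.add_apply]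
  field_simp
  ring

theorem Polynomial.iteratedDeriv_three_div_eval (p q : 𝕜[X]) {x : 𝕜} (hx : q.eval x ≠ 0) :
    iteratedDeriv 3 (fun y => p.eval y / q.eval y) x =
      ((derivative^[3] p).eval x * q.eval x ^ 3
        - (3 * (derivative^[2] p).eval x * (derivative q).eval x
          + 3 * (derivative p).eval x * (derivative^[2] q).eval x
          + p.eval x * (derivative^[3] q).eval x) * q.eval x ^ 2
        + 6 * ((derivative p).eval x * (derivative q).eval x
          + p.eval x * (derivative^[2] q).eval x) * (derivative q).eval x * q.eval x
        - 6 * p.eval x * (derivative q).eval x ^ 3) / q.eval x ^ 4 :=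
  iteratedDeriv_three_div (fun y => p.hasDerivAt y) (fun y => p.derivative.hasDerivAt y)
    (fun y => p.derivative.derivative.hasDerivAt y) (fun y => q.hasDerivAt y)
    (fun y => q.derivative.hasDerivAt y) (fun y => q.derivative.derivative.hasDerivAt y) hx

end QuotientRule

noncomputable section

namespace MKdV

variable (a : ℝ)

def numerator (t : ℝ) : ℝ[X] :=
  X ^ 4 + C (3 / (2 * a ^ 2)) * X ^ 2 - C (3 / (16 * a ^ 4)) - C (24 * t) * X

def cubic (t : ℝ) : ℝ[X] := X ^ 3 + C (12 * t) - C (3 / (4 * a ^ 2)) * X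

def denominator (t : ℝ) : ℝ[X] :=
  C (4 * a ^ 2) * cubic a t ^ 2 + C 9 * (X ^ 2 + C (1 / (4 * a ^ 2))) ^ 2

def solution (t x : ℝ) : ℝ :=
  a - 12 * a * (numerator a t).eval (x - 6 * a ^ 2 * t)
    / (denominator a t).eval (x - 6 * a ^ 2 * t)

theorem solution_apply (t x : ℝ) :
    solution a t x = a - 12 * a * ((x - 6 * a ^ 2 * t) ^ 4
        + 3 / (2 * a ^ 2) * (x - 6 * a ^ 2 * t) ^ 2 - 3 / (16 * a ^ 4)
        - 24 * t * (x - 6 * a ^ 2 * t))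
      / (4 * a ^ 2 * ((x - 6 * a ^ 2 * t) ^ 3 + 12 * t - 3 / (4 * a ^ 2) * (x - 6 * a ^ 2 * t)) ^ 2
        + 9 * ((x - 6 * a ^ 2 * t) ^ 2 + 1 / (4 * a ^ 2)) ^ 2) := by
  simp [solution, numerator, denominator, cubic]

variable {a}

theorem hasDerivAt_numerator_eval_frame (t x : ℝ) :
    HasDerivAt (fun s => (numerator a s).eval (x - 6 * a ^ 2 * s))
      (-(6 * a ^ 2) * (derivative (numerator a t)).eval (x - 6 * a ^ 2 * t)
        - 24 * (x - 6 * a ^ 2 * t)) t := by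
  have hz := (hasDerivAt_const_mul (x := t) (6 * a ^ 2)).const_sub x
  simp only [numerator, eval_sub, eval_add, eval_mul, eval_pow, eval_C, eval_X]
  refine ((((hz.pow 4).add ((hz.pow 2).const_mul _)).sub_const _).sub
    (((hasDerivAt_id t).const_mul 24).mul hz)).congr_deriv ?_
  simp only [derivative_add, derivative_sub, derivative_mul, derivative_C, derivative_X,
    derivative_pow, eval_add, eval_sub, eval_mul, eval_pow, eval_C, eval_X, eval_one, eval_zero,
    id_eq]
  ring

theorem hasDerivAt_denominator_eval_frame (t x : ℝ) :
    HasDerivAt (fun s => (denominator a s).eval (x - 6 * a ^ 2 * s))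
      (-(6 * a ^ 2) * (derivative (denominator a t)).eval (x - 6 * a ^ 2 * t)
        + 96 * a ^ 2 * (cubic a t).eval (x - 6 * a ^ 2 * t)) t := by
  have hz := (hasDerivAt_const_mul (x := t) (6 * a ^ 2)).const_sub x
  simp only [denominator, cubic, eval_sub, eval_add, eval_mul, eval_pow, eval_C, eval_X]
  refine (((((hz.pow 3).add ((hasDerivAt_id t).const_mul 12)).sub (hz.const_mul _)).pow 2
    |>.const_mul _).add (((hz.pow 2).add_const _).pow 2 |>.const_mul _)).congr_deriv ?_
  simp only [Pi.pow_apply, Pi.add_apply, Pi.sub_apply, derivative_add, derivative_sub,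
    derivative_mul, derivative_C, derivative_X, derivative_pow, eval_add, eval_sub, eval_mul,
    eval_pow, eval_C, eval_X, eval_one, eval_zero, id_eq]
  ring

theorem iteratedDeriv_three_solution (t x : ℝ) :
    iteratedDeriv 3 (solution a t) x = -(12 * a) *
      iteratedDeriv 3 (fun z => (numerator a t).eval z / (denominator a t).eval z)
        (x - 6 * a ^ 2 * t) := by
  have h : solution a t = fun x => a - 12 * a *
      (fun z => (numerator a t).eval z / (denominator a t).eval z) (x - 6 * a ^ 2 * t) := by
    ext x
    simp only [solution, mul_div_assoc]
  rw [h, iteratedDeriv_const_sub three_pos, iteratedDeriv_neg, iteratedDeriv_const_mul_field,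
    iteratedDeriv_comp_sub_const (f := fun z => (numerator a t).eval z / (denominator a t).eval z)]
  ring

/-- `-Q⁴ / (12a)` times the mKdV residual of `solution` at `z = x - 6a²t`, with `Q = denominator`. -/
theorem residual_eq_zero (ha : a ≠ 0) (t z : ℝ) :
    ((-(6 * a ^ 2) * (derivative (numerator a t)).eval z - 24 * z) * (denominator a t).eval z
        - (numerator a t).eval z * (-(6 * a ^ 2) * (derivative (denominator a t)).eval z
          + 96 * a ^ 2 * (cubic a t).eval z)) * (denominator a t).eval z ^ 2
      + 6 * (a * (denominator a t).eval z - 12 * a * (numerator a t).eval z) ^ 2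
        * ((derivative (numerator a t)).eval z * (denominator a t).eval z
          - (numerator a t).eval z * (derivative (denominator a t)).eval z)
      + ((derivative^[3] (numerator a t)).eval z * (denominator a t).eval z ^ 3
        - (3 * (derivative^[2] (numerator a t)).eval z * (derivative (denominator a t)).eval z
          + 3 * (derivative (numerator a t)).eval z * (derivative^[2] (denominator a t)).eval z
          + (numerator a t).eval z * (derivative^[3] (denominator a t)).eval z)
          * (denominator a t).eval z ^ 2
        + 6 * ((derivative (numerator a t)).eval z * (derivative (denominator a t)).eval z
          + (numerator a t).eval z * (derivative^[2] (denominator a t)).eval z)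
          * (derivative (denominator a t)).eval z * (denominator a t).eval z
        - 6 * (numerator a t).eval z * (derivative (denominator a t)).eval z ^ 3) = 0 := by
  simp only [numerator, denominator, cubic, Function.iterate_succ, Function.iterate_zero,
    Function.comp_apply, id_eq, derivative_add, derivative_sub, derivative_mul, derivative_C,
    derivative_X, derivative_pow, eval_add, eval_sub, eval_mul, eval_pow, eval_C, eval_X,
    Nat.cast_ofNat, Nat.add_one_sub_one, pow_one, mul_zero, zero_mul, add_zero, zero_add, sub_zero,
    mul_one]
  field_simp
  ring

theorem solution_mkdv (ha : a ≠ 0) (t x : ℝ)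
    (hx : (denominator a t).eval (x - 6 * a ^ 2 * t) ≠ 0) :
    deriv (fun s => solution a s x) t + 6 * solution a t x ^ 2 * deriv (solution a t) x
      + iteratedDeriv 3 (solution a t) x = 0 := by
  have hUt : HasDerivAt (fun s => solution a s x) _ t := (hasDerivAt_const t a).sub
    (((hasDerivAt_numerator_eval_frame t x).const_mul (12 * a)).div
      (hasDerivAt_denominator_eval_frame t x) hx)
  have hUx : HasDerivAt (solution a t) _ x := (hasDerivAt_const x a).sub
    (((((numerator a t).hasDerivAt _).comp_sub_const x _).const_mul (12 * a)).div
      (((denominator a t).hasDerivAt _).comp_sub_const x _) hx)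
  have hclear (P Q P₁ Q₁ Pₜ Qₜ Φ : ℝ) (hQ : Q ≠ 0) :
      (0 - (12 * a * Pₜ * Q - 12 * a * P * Qₜ) / Q ^ 2)
        + 6 * (a - 12 * a * P / Q) ^ 2 * (0 - (12 * a * P₁ * Q - 12 * a * P * Q₁) / Q ^ 2)
        + -(12 * a) * (Φ / Q ^ 4)
      = -(12 * a) * ((Pₜ * Q - P * Qₜ) * Q ^ 2
          + 6 * (a * Q - 12 * a * P) ^ 2 * (P₁ * Q - P * Q₁) + Φ) / Q ^ 4 := by
    field_simp
    ring
  rw [hUt.deriv, hUx.deriv, iteratedDeriv_three_solution,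
    Polynomial.iteratedDeriv_three_div_eval _ _ hx, solution, hclear _ _ _ _ _ _ _ hx,
    residual_eq_zero ha, mul_zero, zero_div]

end MKdV

end

/-- Second rational solution of the mKdV equation `U_t + 6U²U_x + U_{xxx} = 0`. -/
theorem stmt_14 (a : ℝ) (ha : a ≠ 0) (U : ℝ → ℝ → ℝ) (z : ℝ → ℝ → ℝ)
    (hz : ∀ t x, z t x = x - 6 * a^2 * t)
    (hU : ∀ t x, U t x = a - 12 * a * ((z t x)^4 + (3 / (2 * a^2)) * (z t x)^2
        - 3 / (16 * a^4) - 24 * t * z t x)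
      / (4 * a^2 * ((z t x)^3 + 12 * t - (3 / (4 * a^2)) * z t x)^2
        + 9 * ((z t x)^2 + 1 / (4 * a^2))^2)) :
    ∀ t x, 4 * a^2 * ((z t x)^3 + 12 * t - (3 / (4 * a^2)) * z t x)^2
        + 9 * ((z t x)^2 + 1 / (4 * a^2))^2 ≠ 0 →
      deriv (fun s => U s x) t + 6 * (U t x)^2 * deriv (U t) x
        + iteratedDeriv 3 (U t) x = 0 := by
  intro t x hx
  have hU_eq : U = MKdV.solution a := by
    ext s y
    rw [hU, hz, MKdV.solution_apply]
  subst hU_eq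
  refine MKdV.solution_mkdv ha t x ?_
  simpa [MKdV.denominator, MKdV.cubic, hz] using hx
end

section
/- Let a₁, a₂, b₁, b₂ be constants with a₁, a₂ ≠ 0 and a₁ + a₂ ≠ 0, let A = ((a₁−a₂)/(a₁+a₂))², θᵢ = aᵢ x − aᵢ³ t + bᵢ. Then U(t,x) = [e^{θ₁}(1 + (A/(4a₂²))e^{2θ₂}) + e^{θ₂}(1 + (A/(4a₁²))e^{2θ₁})] / [((1/(2a₁))e^{θ₁} + (1/(2a₂))e^{θ₂})² + (1 − (A/(4a₁a₂))e^{θ₁+θ₂})²] solves U_t + 6U² U_x + U_{xxx} = 0 on the set where the denominator is nonzero. -/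
/-!
Put `X = e^{θ₁} / (2a₁)` and `Y = e^{θ₂} / (2a₂)`. Then `U = N / D` with
`N = 2a₁X(1 + AY²) + 2a₂Y(1 + AX²)` and `D = (X + Y)² + (1 - AXY)²`. Since `∂ₓX = a₁X`,
`∂ₓY = a₂Y`, `∂ₜX = -a₁³X`, `∂ₜY = -a₂³Y`, differentiating `N` or `D` only multiplies each
monomial by its weight, so `D⁴ (U_t + 6U²U_x + U_xxx)` is a polynomial in `X`, `Y`. With
`c = (a₁ - a₂)/(a₁ + a₂)` and `s = (a₁ + a₂)/2` we have `a₁ = (1 + c)s`, `a₂ = (1 - c)s` and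
`A = c²`, so it is a polynomial in `c, s, X, Y`, and it vanishes identically.
-/

open Filter Topology

theorem deriv_div_eventuallyEq {N N' D D' : ℝ → ℝ} (hN : ∀ y, HasDerivAt N (N' y) y)
    (hD : ∀ y, HasDerivAt D (D' y) y) {x : ℝ} (hx : D x ≠ 0) :
    deriv (fun y => N y / D y) =ᶠ[𝓝 x] fun y => (N' y * D y - N y * D' y) / D y ^ 2 := by
  filter_upwards [(hD x).continuousAt.eventually_ne hx] with y hy
  exact ((hN y).div (hD y) hy).deriv

theorem iteratedDeriv_three_div_s15 {N N₁ N₂ N₃ D D₁ D₂ D₃ : ℝ → ℝ}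
    (hN : ∀ y, HasDerivAt N (N₁ y) y) (hN₁ : ∀ y, HasDerivAt N₁ (N₂ y) y)
    (hN₂ : ∀ y, HasDerivAt N₂ (N₃ y) y) (hD : ∀ y, HasDerivAt D (D₁ y) y)
    (hD₁ : ∀ y, HasDerivAt D₁ (D₂ y) y) (hD₂ : ∀ y, HasDerivAt D₂ (D₃ y) y) {x : ℝ}
    (hx : D x ≠ 0) :
    iteratedDeriv 3 (fun y => N y / D y) x =
      (N₃ x * D x ^ 3 - 3 * N₂ x * D₁ x * D x ^ 2 - 3 * N₁ x * D₂ x * D x ^ 2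
        + 6 * N₁ x * D₁ x ^ 2 * D x - N x * D₃ x * D x ^ 2 + 6 * N x * D₁ x * D₂ x * D x
        - 6 * N x * D₁ x ^ 3) / D x ^ 4 := by
  have hM : ∀ y, HasDerivAt (fun y => N₁ y * D y - N y * D₁ y) (N₂ y * D y - N y * D₂ y) y :=
    fun y => (((hN₁ y).mul (hD y)).sub ((hN y).mul (hD₁ y))).congr_deriv (by ring)
  have hM' : ∀ y, HasDerivAt (fun y => N₂ y * D y - N y * D₂ y)
      (N₃ y * D y + N₂ y * D₁ y - N₁ y * D₂ y - N y * D₃ y) y :=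
    fun y => (((hN₂ y).mul (hD y)).sub ((hN y).mul (hD₂ y))).congr_deriv (by ring)
  have hQ : ∀ y, HasDerivAt (fun y => D y ^ 2) (2 * D y * D₁ y) y :=
    fun y => ((hD y).pow 2).congr_deriv (by ring)
  have hQ' : ∀ y, HasDerivAt (fun y => 2 * D y * D₁ y) (2 * D₁ y ^ 2 + 2 * D y * D₂ y) y :=
    fun y => (((hD y).const_mul 2).mul (hD₁ y)).congr_deriv (by ring)
  have h₂ : deriv (deriv fun y => N y / D y) =ᶠ[𝓝 x] fun y =>
      ((N₂ y * D y - N y * D₂ y) * D y ^ 2 - (N₁ y * D y - N y * D₁ y) * (2 * D y * D₁ y))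
        / (D y ^ 2) ^ 2 :=
    (deriv_div_eventuallyEq hN hD hx).deriv.trans (deriv_div_eventuallyEq hM hQ (pow_ne_zero 2 hx))
  have h₃ := (((hM' x).fun_mul (hQ x)).fun_sub ((hM x).fun_mul (hQ' x))).fun_div
    ((hQ x).fun_pow 2) (by positivity)
  rw [iteratedDeriv_succ, iteratedDeriv_succ, iteratedDeriv_one, h₂.deriv_eq, h₃.deriv]
  field_simp
  ring

/-- `d 0 ^ 4 * (u_t + 6 u² u_x + u_xxx)` for `u = n 0 / d 0`, where `n j`, `d j` are the `j`-th
`x`-derivatives of numerator and denominator and `nt`, `dt` their `t`-derivatives. -/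
def mKdVNumerator (n d : ℕ → ℝ) (nt dt : ℝ) : ℝ :=
  (nt * d 0 - n 0 * dt) * d 0 ^ 2 + 6 * n 0 ^ 2 * (n 1 * d 0 - n 0 * d 1)
    + (n 3 * d 0 ^ 3 - 3 * n 2 * d 1 * d 0 ^ 2 - 3 * n 1 * d 2 * d 0 ^ 2
      + 6 * n 1 * d 1 ^ 2 * d 0 - n 0 * d 3 * d 0 ^ 2 + 6 * n 0 * d 1 * d 2 * d 0
      - 6 * n 0 * d 1 ^ 3)

theorem mKdV_residual_div {U N D : ℝ → ℝ → ℝ} {n d : ℕ → ℝ → ℝ} {nt dt t x : ℝ}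
    (hU : ∀ s y, U s y = N s y / D s y)
    (hNt : HasDerivAt (fun s => N s x) nt t) (hDt : HasDerivAt (fun s => D s x) dt t)
    (hn₀ : N t = n 0) (hd₀ : D t = d 0)
    (hn : ∀ j y, HasDerivAt (n j) (n (j + 1) y) y) (hd : ∀ j y, HasDerivAt (d j) (d (j + 1) y) y)
    (hx : d 0 x ≠ 0) :
    deriv (fun s => U s x) t + 6 * U t x ^ 2 * deriv (U t) x + iteratedDeriv 3 (U t) x
      = mKdVNumerator (fun j => n j x) (fun j => d j x) nt dt / d 0 x ^ 4 := by
  have hUt : U t = fun y => n 0 y / d 0 y := funext fun y => by rw [hU, hn₀, hd₀]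
  have hUs : HasDerivAt (fun s => U s x) ((nt * D t x - N t x * dt) / D t x ^ 2) t := by
    simp only [hU]
    exact hNt.div hDt (by rwa [hd₀])
  rw [hUs.deriv, hUt, ((hn 0 x).fun_div (hd 0 x) hx).deriv,
    iteratedDeriv_three_div_s15 (hn 0) (hn 1) (hn 2) (hd 0) (hd 1) (hd 2) hx, hn₀, hd₀]
  simp only [mKdVNumerator]
  field_simp

/-- The `j`-th derivative of `2a₁X(1 + AY²) + 2a₂Y(1 + AX²)` along a flow with `X' = w₁X`,
`Y' = w₂Y`: the monomial `XᵐYⁿ` picks up the factor `(m w₁ + n w₂)ʲ`. -/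
def twoSolitonNum (a₁ a₂ A w₁ w₂ : ℝ) (j : ℕ) (X Y : ℝ) : ℝ :=
  2 * a₁ * w₁ ^ j * X + 2 * a₂ * w₂ ^ j * Y + 2 * a₁ * A * (w₁ + 2 * w₂) ^ j * X * Y ^ 2
    + 2 * a₂ * A * (2 * w₁ + w₂) ^ j * X ^ 2 * Y

/-- The same for `(X + Y)² + (1 - AXY)²`; the constant term has weight `0`, and `0 ^ 0 = 1`. -/
def twoSolitonDen (A w₁ w₂ : ℝ) (j : ℕ) (X Y : ℝ) : ℝ :=
  0 ^ j + (2 * w₁) ^ j * X ^ 2 + 2 * (1 - A) * (w₁ + w₂) ^ j * X * Y + (2 * w₂) ^ j * Y ^ 2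
    + A ^ 2 * (2 * w₁ + 2 * w₂) ^ j * X ^ 2 * Y ^ 2

section Flow

variable {X Y : ℝ → ℝ} {w₁ w₂ y : ℝ}

theorem hasDerivAt_pow_mul_pow (hX : HasDerivAt X (w₁ * X y) y) (hY : HasDerivAt Y (w₂ * Y y) y)
    (m n : ℕ) :
    HasDerivAt (fun y => X y ^ m * Y y ^ n) ((m * w₁ + n * w₂) * (X y ^ m * Y y ^ n)) y := by
  refine ((hX.fun_pow m).fun_mul (hY.fun_pow n)).congr_deriv ?_
  rcases m with _ | m <;> rcases n with _ | n <;>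
    simp only [Nat.cast_zero, Nat.cast_add_one, zero_mul, pow_zero, add_tsub_cancel_right] <;> ring

theorem hasDerivAt_twoSolitonNum (hX : HasDerivAt X (w₁ * X y) y)
    (hY : HasDerivAt Y (w₂ * Y y) y) (a₁ a₂ A : ℝ) (j : ℕ) :
    HasDerivAt (fun y => twoSolitonNum a₁ a₂ A w₁ w₂ j (X y) (Y y))
      (twoSolitonNum a₁ a₂ A w₁ w₂ (j + 1) (X y) (Y y)) y := by
  have h := hasDerivAt_pow_mul_pow hX hY
  refine ((((((h 1 0).const_mul (2 * a₁ * w₁ ^ j)).fun_add ((h 0 1).const_mul (2 * a₂ * w₂ ^ j))).fun_add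
    ((h 1 2).const_mul (2 * a₁ * A * (w₁ + 2 * w₂) ^ j))).fun_add
    ((h 2 1).const_mul (2 * a₂ * A * (2 * w₁ + w₂) ^ j))).congr_of_eventuallyEq ?_).congr_deriv ?_
  · exact Eventually.of_forall fun z => by simp only [twoSolitonNum]; ring
  · simp only [twoSolitonNum, Nat.cast_zero, Nat.cast_one, Nat.cast_ofNat, pow_succ]
    ring

theorem hasDerivAt_twoSolitonDen (hX : HasDerivAt X (w₁ * X y) y)
    (hY : HasDerivAt Y (w₂ * Y y) y) (A : ℝ) (j : ℕ) :
    HasDerivAt (fun y => twoSolitonDen A w₁ w₂ j (X y) (Y y))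
      (twoSolitonDen A w₁ w₂ (j + 1) (X y) (Y y)) y := by
  have h := hasDerivAt_pow_mul_pow hX hY
  refine ((((((hasDerivAt_const y ((0 : ℝ) ^ j)).fun_add ((h 2 0).const_mul ((2 * w₁) ^ j))).fun_add
    ((h 1 1).const_mul (2 * (1 - A) * (w₁ + w₂) ^ j))).fun_add ((h 0 2).const_mul ((2 * w₂) ^ j))).fun_add
    ((h 2 2).const_mul (A ^ 2 * (2 * w₁ + 2 * w₂) ^ j))).congr_of_eventuallyEq ?_).congr_deriv ?_
  · exact Eventually.of_forall fun z => by simp only [twoSolitonDen]; ring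
  · simp only [twoSolitonDen, Nat.cast_zero, Nat.cast_one, Nat.cast_ofNat, pow_succ]
    ring

end Flow

set_option maxHeartbeats 1000000 in
theorem mKdVNumerator_twoSoliton {a₁ a₂ c : ℝ} (hc : a₁ - a₂ = c * (a₁ + a₂)) (X Y : ℝ) :
    mKdVNumerator (fun j => twoSolitonNum a₁ a₂ (c ^ 2) a₁ a₂ j X Y)
      (fun j => twoSolitonDen (c ^ 2) a₁ a₂ j X Y)
      (twoSolitonNum a₁ a₂ (c ^ 2) (-a₁ ^ 3) (-a₂ ^ 3) 1 X Y)
      (twoSolitonDen (c ^ 2) (-a₁ ^ 3) (-a₂ ^ 3) 1 X Y) = 0 := by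
  obtain ⟨s, rfl, rfl⟩ : ∃ s, a₁ = (1 + c) * s ∧ a₂ = (1 - c) * s :=
    ⟨(a₁ + a₂) / 2, by linear_combination hc / 2, by linear_combination -hc / 2⟩
  simp only [mKdVNumerator, twoSolitonNum, twoSolitonDen]
  ring

section Soliton

variable {θ : ℝ → ℝ → ℝ} {a b : ℝ}

theorem hasDerivAt_exp_soliton_space (hθ : ∀ t x, θ t x = a * x - a ^ 3 * t + b) (c t x : ℝ) :
    HasDerivAt (fun x => Real.exp (θ t x) / c) (a * (Real.exp (θ t x) / c)) x := by
  simp only [hθ]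
  exact (((((hasDerivAt_id' x).const_mul a).sub_const (a ^ 3 * t)).add_const b).exp.div_const c
    ).congr_deriv (by ring)

theorem hasDerivAt_exp_soliton_time (hθ : ∀ t x, θ t x = a * x - a ^ 3 * t + b) (c t x : ℝ) :
    HasDerivAt (fun t => Real.exp (θ t x) / c) (-a ^ 3 * (Real.exp (θ t x) / c)) t := by
  simp only [hθ]
  exact (((((hasDerivAt_id' t).const_mul (a ^ 3)).const_sub (a * x)).add_const b).exp.div_const c
    ).congr_deriv (by ring)

end Soliton

theorem twoSolitonNum_zero {a₁ a₂ : ℝ} (ha₁ : a₁ ≠ 0) (ha₂ : a₂ ≠ 0) (A w₁ w₂ θ₁ θ₂ : ℝ) :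
    twoSolitonNum a₁ a₂ A w₁ w₂ 0 (Real.exp θ₁ / (2 * a₁)) (Real.exp θ₂ / (2 * a₂)) =
      Real.exp θ₁ * (1 + A / (4 * a₂ ^ 2) * Real.exp (2 * θ₂))
        + Real.exp θ₂ * (1 + A / (4 * a₁ ^ 2) * Real.exp (2 * θ₁)) := by
  rw [two_mul θ₁, two_mul θ₂, Real.exp_add, Real.exp_add]
  simp only [twoSolitonNum]
  field_simp
  ring

theorem twoSolitonDen_zero {a₁ a₂ : ℝ} (ha₁ : a₁ ≠ 0) (ha₂ : a₂ ≠ 0) (A w₁ w₂ θ₁ θ₂ : ℝ) :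
    twoSolitonDen A w₁ w₂ 0 (Real.exp θ₁ / (2 * a₁)) (Real.exp θ₂ / (2 * a₂)) =
      (1 / (2 * a₁) * Real.exp θ₁ + 1 / (2 * a₂) * Real.exp θ₂) ^ 2
        + (1 - A / (4 * a₁ * a₂) * Real.exp (θ₁ + θ₂)) ^ 2 := by
  rw [Real.exp_add]
  simp only [twoSolitonDen]
  field_simp
  ring

/-- Two-soliton solution of the mKdV equation `U_t + 6U²U_x + U_{xxx} = 0`. -/
theorem stmt_15 (a₁ a₂ b₁ b₂ : ℝ) (ha₁ : a₁ ≠ 0) (ha₂ : a₂ ≠ 0) (ha : a₁ + a₂ ≠ 0)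
    (A : ℝ) (hA : A = ((a₁ - a₂) / (a₁ + a₂))^2)
    (θ₁ θ₂ : ℝ → ℝ → ℝ)
    (hθ₁ : ∀ t x, θ₁ t x = a₁ * x - a₁^3 * t + b₁)
    (hθ₂ : ∀ t x, θ₂ t x = a₂ * x - a₂^3 * t + b₂)
    (U : ℝ → ℝ → ℝ)
    (hU : ∀ t x, U t x =
      (Real.exp (θ₁ t x) * (1 + (A / (4 * a₂^2)) * Real.exp (2 * θ₂ t x))
        + Real.exp (θ₂ t x) * (1 + (A / (4 * a₁^2)) * Real.exp (2 * θ₁ t x)))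
      / (((1 / (2 * a₁)) * Real.exp (θ₁ t x) + (1 / (2 * a₂)) * Real.exp (θ₂ t x))^2
        + (1 - (A / (4 * a₁ * a₂)) * Real.exp (θ₁ t x + θ₂ t x))^2)) :
    ∀ t x, ((1 / (2 * a₁)) * Real.exp (θ₁ t x) + (1 / (2 * a₂)) * Real.exp (θ₂ t x))^2
        + (1 - (A / (4 * a₁ * a₂)) * Real.exp (θ₁ t x + θ₂ t x))^2 ≠ 0 →
      deriv (fun s => U s x) t + 6 * (U t x)^2 * deriv (U t) x
        + iteratedDeriv 3 (U t) x = 0 := by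
  intro t x hx
  have hU' : ∀ s y, U s y =
      twoSolitonNum a₁ a₂ A (-a₁ ^ 3) (-a₂ ^ 3) 0
          (Real.exp (θ₁ s y) / (2 * a₁)) (Real.exp (θ₂ s y) / (2 * a₂))
        / twoSolitonDen A (-a₁ ^ 3) (-a₂ ^ 3) 0
          (Real.exp (θ₁ s y) / (2 * a₁)) (Real.exp (θ₂ s y) / (2 * a₂)) := fun s y => by
    rw [hU, twoSolitonNum_zero ha₁ ha₂, twoSolitonDen_zero ha₁ ha₂]
  have hX := hasDerivAt_exp_soliton_space hθ₁ (2 * a₁) t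
  have hY := hasDerivAt_exp_soliton_space hθ₂ (2 * a₂) t
  have hXt := hasDerivAt_exp_soliton_time hθ₁ (2 * a₁) t x
  have hYt := hasDerivAt_exp_soliton_time hθ₂ (2 * a₂) t x
  rw [mKdV_residual_div
    (n := fun j y => twoSolitonNum a₁ a₂ A a₁ a₂ j
      (Real.exp (θ₁ t y) / (2 * a₁)) (Real.exp (θ₂ t y) / (2 * a₂)))
    (d := fun j y => twoSolitonDen A a₁ a₂ j
      (Real.exp (θ₁ t y) / (2 * a₁)) (Real.exp (θ₂ t y) / (2 * a₂)))
    hU' (hasDerivAt_twoSolitonNum hXt hYt _ _ _ 0) (hasDerivAt_twoSolitonDen hXt hYt _ 0)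
    (by simp [twoSolitonNum]) (by simp [twoSolitonDen])
    (fun j y => hasDerivAt_twoSolitonNum (hX y) (hY y) _ _ _ j)
    (fun j y => hasDerivAt_twoSolitonDen (hX y) (hY y) _ j)]
  · subst hA
    rw [mKdVNumerator_twoSoliton (div_mul_cancel₀ _ ha).symm, zero_div]
  · rwa [twoSolitonDen_zero ha₁ ha₂]
end

section
/- If g(t) = c₀ e^{−2∫h(t)dt} for a constant c₀ ≠ 0 and smooth h, then the gauge transformation t̃ = ∫ e^{−2∫h dt} dt, x̃ = x, ũ = e^{∫h dt} u maps u_t + u² u_x + g(t) u_{xxx} + h(t) u = 0 to the constant coefficient equation ũ_{t̃} + ũ² ũ_{x̃} + c₀ ũ_{x̃x̃x̃} = 0; i.e., if u solves the former then ũ solves the latter. -/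
lemma itd3_const_mul (c : ℝ) {f : ℝ → ℝ} (hf : ContDiff ℝ (3:ℕ) f) (x : ℝ) :
    iteratedDeriv 3 (fun y => c * f y) x = c * iteratedDeriv 3 f x := by
  have h1 : (fun y => c * f y) = fun y => c • f y := by funext y; simp
  rw [h1]
  rw [iteratedDeriv, iteratedFDeriv_const_smul_apply' hf.contDiffAt, iteratedDeriv]
  simp

/-- If `g = c₀ e^{−2∫h}`, the gauge transformation maps
`u_t + u²u_x + g(t)u_{xxx} + h(t)u = 0` to `ũ_t̃ + ũ²ũ_x̃ + c₀ũ_x̃x̃x̃ = 0`. -/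
theorem stmt_16 (c₀ : ℝ) (hc₀ : c₀ ≠ 0) (h H g : ℝ → ℝ) (u u1 : ℝ → ℝ → ℝ) (T : ℝ → ℝ)
    (hh : ContDiff ℝ (⊤ : ℕ∞) h)
    (hH : ∀ t, HasDerivAt H (h t) t)
    (hg : ∀ t, g t = c₀ * Real.exp (-2 * H t))
    (hu : ContDiff ℝ (⊤ : ℕ∞) (fun p : ℝ × ℝ => u p.1 p.2))
    (hu1 : ContDiff ℝ (⊤ : ℕ∞) (fun p : ℝ × ℝ => u1 p.1 p.2))
    (hT : ∀ t, T t = ∫ s in (0:ℝ)..t, Real.exp (-2 * H s))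
    (hsol : ∀ t x, deriv (fun s => u s x) t + (u t x)^2 * deriv (u t) x
      + g t * iteratedDeriv 3 (u t) x + h t * u t x = 0)
    (hrel : ∀ t x, u1 (T t) x = Real.exp (H t) * u t x) :
    ∀ t x, deriv (fun s => u1 s x) (T t) + (u1 (T t) x)^2 * deriv (u1 (T t)) x
      + c₀ * iteratedDeriv 3 (u1 (T t)) x = 0 := by
  intro t x
  set E := Real.exp (H t) with hE
  have hHc : Continuous H := continuous_iff_continuousAt.mpr fun s => (hH s).continuousAt
  have hTd : HasDerivAt T (Real.exp (-2 * H t)) t := by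
    have hfc : Continuous fun s => Real.exp (-2 * H s) :=
      (Real.continuous_exp.comp ((continuous_const.mul hHc)))
    have := (hfc.integral_hasStrictDerivAt 0 t).hasDerivAt
    have hfun : T = fun t => ∫ s in (0:ℝ)..t, Real.exp (-2 * H s) := funext hT
    rw [hfun]
    exact this
  -- time derivative of u1 at (T t, x)
  have hu1diff : Differentiable ℝ (fun s => u1 s x) :=
    (hu1.differentiable (by simp)).comp (differentiable_id.prodMk (differentiable_const x))
  have hu1t : HasDerivAt (fun s => u1 s x) (deriv (fun s => u1 s x) (T t)) (T t) :=
    (hu1diff (T t)).hasDerivAt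
  have hudiff : Differentiable ℝ (fun s => u s x) :=
    (hu.differentiable (by simp)).comp (differentiable_id.prodMk (differentiable_const x))
  have hut : HasDerivAt (fun s => u s x) (deriv (fun s => u s x) t) t := (hudiff t).hasDerivAt
  have hcomp : HasDerivAt (fun τ => u1 (T τ) x)
      (deriv (fun s => u1 s x) (T t) * Real.exp (-2 * H t)) t := hu1t.comp t hTd
  have hrhsD : HasDerivAt (fun τ => Real.exp (H τ) * u τ x)
      (E * h t * u t x + E * deriv (fun s => u s x) t) t := by
    refine ((hH t).exp.mul hut).congr_deriv ?_
    rw [hE]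
  have hfeq : (fun τ => u1 (T τ) x) = fun τ => Real.exp (H τ) * u τ x :=
    funext fun τ => hrel τ x
  have hkey : deriv (fun s => u1 s x) (T t) * Real.exp (-2 * H t)
      = E * h t * u t x + E * deriv (fun s => u s x) t := by
    have := hcomp
    rw [hfeq] at this
    exact this.unique hrhsD
  -- spatial derivatives
  have hutC : ContDiff ℝ (⊤ : ℕ∞) (u t) := hu.comp ((contDiff_const.prodMk contDiff_id))
  have hsp : u1 (T t) = fun y => E * u t y := funext fun y => hrel t y
  have hdx : deriv (u1 (T t)) x = E * deriv (u t) x := by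
    rw [hsp, deriv_const_mul _ ((hutC.differentiable (by simp)) x)]
  have hdxxx : iteratedDeriv 3 (u1 (T t)) x = E * iteratedDeriv 3 (u t) x := by
    rw [hsp, itd3_const_mul E (hutC.of_le (WithTop.coe_le_coe.mpr le_top)) x]
  have hexp2 : Real.exp (-2 * H t) * (E * E) = 1 := by
    rw [hE, ← Real.exp_add, ← Real.exp_add,
      show -2 * H t + (H t + H t) = 0 by ring, Real.exp_zero]
  have hd : deriv (fun s => u1 s x) (T t)
      = (E * h t * u t x + E * deriv (fun s => u s x) t) * (E * E) := by
    linear_combination (E * E) * hkey - (deriv (fun s => u1 s x) (T t)) * hexp2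
  have hs := hsol t x
  rw [hg t] at hs
  rw [hd, hdx, hdxxx, hrel t x, ← hE]
  linear_combination (E * E * E) * hs - c₀ * iteratedDeriv 3 (u t) x * E * hexp2
end
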